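/- arXiv:1609.07591 — 2 statements merged into one kernel-verified Lean document; each statement's English description precedes it below -/
import Mathlib

section
/- Let n ≥ 2 and 0 ≤ k ≤ n−2 be natural numbers. Let S_k ⊆ ℝ^n denote the origin {0} if k = 0, and the unit k-sphere {y ∈ ℝ^n : ‖y‖ = 1 and y_j = 0 for all indices j ≥ k+1} if k ≥ 1; fix x ∈ ℝ^n with x ∉ S_k. Then every homotopy class is realized by a totally real embedding: for every continuous map G : OnePoint(ℝ^n) → {y : ℝ^n // y ∉ S_k} with G(∞) = x, there exists a C^∞ topological embedding f : ℝ^n → ℝ^n × ℝ^n with everywhere injective derivative such that (i) for some compact set K ⊆ ℝ^n, f(u) = (x,u) for all u ∉ K (f coincides with the cotangent fiber over x near infinity); (ii) f is totally real: for every u, the image P of the derivative of f at u satisfies P ∩ J(P) = {0}, where J(q,p) = (−p, q); (iii) (f(u)).1 ∉ S_k for every u; and (iv) the continuous extension f_f : OnePoint(ℝ^n) → {y : ℝ^n // y ∉ S_k} of u ↦ (f(u)).1 with f_f(∞) = x is homotopic to G. -/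
/-
If `G` is replaced, up to homotopy, by `u ↦ x + h u` with `h` smooth and compactly supported
(a uniform approximation, finer than the distance from the compact image of `G` to the closed set
`S_k`, joined to `G` by straight segments), then rescaling the domain, `u ↦ x + h (ε u)`, is a
homotopy through maps fixing `∞` which makes `‖dh‖ < 1`. The embedding is the graph
`f u = (x + h (ε u), u)` of this map from the fibre to the base: a tangent space `{(A v, v)}`
with `‖A‖ < 1` is totally real, since `(A v, v) = J (A w, w) = (-w, A w)` forces `A (A w) = -w`.
-/

open scoped RealInnerProductSpace
open OnePoint

noncomputable section

/-- `ℝ^n` as Euclidean space. -/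
abbrev Euc (n : ℕ) : Type := EuclideanSpace ℝ (Fin n)

/-- The standard complex structure `J(q,p) = (−p, q)` on `ℝ^n × ℝ^n`, as a linear map. -/
def Jstd (n : ℕ) : (Euc n × Euc n) →ₗ[ℝ] (Euc n × Euc n) :=
  LinearMap.prod (-(LinearMap.snd ℝ (Euc n) (Euc n))) (LinearMap.fst ℝ (Euc n) (Euc n))

/-- `S_k ⊆ ℝ^n`: the origin if `k = 0`, and the unit `k`-sphere in the coordinate subspace
`ℝ^{k+1} ⊆ ℝ^n` if `k ≥ 1`. -/
def SkSet (n k : ℕ) : Set (Euc n) :=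
  if k = 0 then {0}
  else {y : Euc n | ‖y‖ = 1 ∧ ∀ j : Fin n, k + 1 ≤ (j : ℕ) → y j = 0}

open Filter Topology Function Set Bornology
open scoped unitInterval

theorem Continuous.exists_contDiff_hasCompactSupport_dist_lt {E F : Type*}
    [NormedAddCommGroup E] [NormedSpace ℝ E] [FiniteDimensional ℝ E]
    [NormedAddCommGroup F] [NormedSpace ℝ F] [CompleteSpace F] {f : E → F} {y : F}
    (hf : Continuous f) (hy : Tendsto f (cocompact E) (𝓝 y)) {ε : ℝ} (hε : 0 < ε) :
    ∃ h : E → F, ContDiff ℝ (⊤ : ℕ∞) h ∧ HasCompactSupport h ∧ ∀ u, dist (y + h u) (f u) < ε := by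
  obtain ⟨g, hg, hgf⟩ :=
    (hf.uniformContinuous_of_tendsto_cocompact hy).exists_contDiff_dist_le (half_pos hε)
  rw [← Metric.cobounded_eq_cocompact] at hy
  obtain ⟨R, -, hR⟩ := hasBasis_cobounded_norm.eventually_iff.1
    (hy.eventually (Metric.ball_mem_nhds y (half_pos hε)))
  -- smooth `f` uniformly, then cut off by a bump equal to `1` where `f` may be far from `y`
  let φ : ContDiffBump (0 : E) := ⟨|R| + 1, |R| + 2, by positivity, by linarith⟩
  refine ⟨fun u => φ u • (g u - y), φ.contDiff.smul (hg.sub contDiff_const),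
    φ.hasCompactSupport.smul_right, fun u => ?_⟩
  have htail : (1 - φ u) * dist y (f u) ≤ ε / 2 := by
    by_cases hu : ‖u‖ ≤ |R| + 1
    · rw [φ.one_of_mem_closedBall (by simpa using hu)]
      simp only [sub_self, zero_mul]
      exact (half_pos hε).le
    · have : f u ∈ Metric.ball y (ε / 2) := hR (show R ≤ ‖u‖ by linarith [le_abs_self R])
      rw [Metric.mem_ball, dist_comm] at this
      nlinarith [φ.nonneg (x := u), φ.le_one (x := u), dist_nonneg (x := y) (y := f u)]
  calc dist (y + φ u • (g u - y)) (f u)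
      = ‖φ u • (g u - f u) + (1 - φ u) • (y - f u)‖ := by
        rw [dist_eq_norm]; congr 1; simp only [smul_sub, sub_smul, one_smul]; abel
    _ ≤ φ u * dist (g u) (f u) + (1 - φ u) * dist y (f u) := by
        refine (norm_add_le _ _).trans_eq ?_
        rw [norm_smul, norm_smul, Real.norm_of_nonneg φ.nonneg,
          Real.norm_of_nonneg (sub_nonneg.2 φ.le_one), dist_eq_norm, dist_eq_norm]
    _ < ε / 2 + ε / 2 := by
        have := hgf u
        nlinarith [φ.nonneg (x := u), φ.le_one (x := u), dist_nonneg (x := g u) (y := f u)]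
    _ = ε := add_halves ε

theorem HasCompactSupport.exists_pos_forall_norm_fderiv_comp_smul_lt {E F : Type*}
    [NormedAddCommGroup E] [NormedSpace ℝ E] [NormedAddCommGroup F] [NormedSpace ℝ F]
    {h : E → F} (hs : HasCompactSupport h) (hh : ContDiff ℝ 1 h) {c : ℝ} (hc : 0 < c) :
    ∃ ε : ℝ, 0 < ε ∧ ∀ u, ‖fderiv ℝ (fun v => h (ε • v)) u‖ < c := by
  obtain ⟨M, hM⟩ :=
    (hs.fderiv (𝕜 := ℝ)).exists_bound_of_continuous (hh.continuous_fderiv one_ne_zero)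
  have hM0 : 0 ≤ M := (norm_nonneg _).trans (hM 0)
  refine ⟨c / (M + 1), by positivity, fun u => ?_⟩
  rw [fderiv_comp_smul, norm_smul, Real.norm_of_nonneg (by positivity)]
  calc c / (M + 1) * ‖fderiv ℝ h ((c / (M + 1)) • u)‖ ≤ c / (M + 1) * M := by gcongr; exact hM _
    _ < c := by rw [div_mul_eq_mul_div, div_lt_iff₀ (by positivity)]; linarith

theorem DifferentiableAt.fderiv_prodMk_id {E F : Type*} [NormedAddCommGroup E] [NormedSpace ℝ E]
    [NormedAddCommGroup F] [NormedSpace ℝ F] {g : E → F} {u : E} (hg : DifferentiableAt ℝ g u) :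
    fderiv ℝ (fun v => (g v, v)) u = (fderiv ℝ g u).prod (.id ℝ E) := by
  rw [hg.fderiv_prodMk differentiableAt_fun_id, fderiv_fun_id]

theorem OnePoint.continuous_map_uncurry {Z X Y : Type*} [TopologicalSpace Z] [TopologicalSpace X]
    [TopologicalSpace Y] {f : Z → X → Y} (hf : Continuous (uncurry f))
    (h : Tendsto (uncurry f) (⊤ ×ˢ coclosedCompact X) (coclosedCompact Y)) :
    Continuous fun p : Z × OnePoint X => p.2.map (f p.1) := by
  rw [continuous_iff_continuousAt]
  rintro ⟨z, w⟩
  induction w using OnePoint.rec with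
  | infty =>
    rw [ContinuousAt, nhds_prod_eq, nhds_infty_eq, prod_sup, tendsto_sup,
      ← Filter.map_id (f := 𝓝 z), prod_map_map_eq', tendsto_map'_iff, Filter.map_id, prod_pure,
      tendsto_map'_iff]
    exact ⟨tendsto_coe_infty.comp (h.mono_left (prod_mono le_top le_rfl)), tendsto_const_nhds⟩
  | coe u =>
    have hcoe : IsOpenEmbedding (Prod.map id ((↑) : X → OnePoint X) : Z × X → Z × OnePoint X) :=
      IsOpenEmbedding.id.prodMap isOpenEmbedding_coe
    have : ContinuousAt ((fun p : Z × OnePoint X => p.2.map (f p.1)) ∘ Prod.map id (↑)) (z, u) :=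
      (continuous_coe.comp hf).continuousAt
    exact hcoe.continuousAt_iff.1 this

theorem tendsto_smul_prod_cobounded {Z E : Type*} [NormedAddCommGroup E] [NormedSpace ℝ E]
    {a : Z → ℝ} {c : ℝ} (hc : 0 < c) (ha : ∀ z, c ≤ a z) :
    Tendsto (fun p : Z × E => a p.1 • p.2) (⊤ ×ˢ cobounded E) (cobounded E) := by
  rw [← tendsto_norm_atTop_iff_cobounded]
  refine tendsto_atTop_mono (fun p => ?_)
    ((tendsto_norm_cobounded_atTop.comp tendsto_snd).const_mul_atTop hc)
  rw [norm_smul, Real.norm_of_nonneg (hc.le.trans (ha p.1))]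
  exact mul_le_mul_of_nonneg_right (ha p.1) (norm_nonneg _)

theorem OnePoint.homotopic_id_onePointCongr_smulOfNeZero {E : Type*} [NormedAddCommGroup E]
    [NormedSpace ℝ E] [ProperSpace E] {ε : ℝ} (hε : 0 < ε) :
    (ContinuousMap.id (OnePoint E)).Homotopic
      ((Homeomorph.smulOfNeZero (α := E) ε hε.ne').onePointCongr : C(OnePoint E, OnePoint E)) := by
  let a : I → ℝ := fun t => (1 - t) + t * ε
  have ha : ∀ t, min 1 ε ≤ a t := fun t => by
    nlinarith [t.2.1, t.2.2, min_le_left 1 ε, min_le_right 1 ε]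
  have hcont : Continuous fun p : I × OnePoint E => p.2.map (a p.1 • ·) := by
    refine continuous_map_uncurry (f := fun t (u : E) => a t • u) (by fun_prop) ?_
    rw [coclosedCompact_eq_cocompact, ← Metric.cobounded_eq_cocompact]
    exact tendsto_smul_prod_cobounded (lt_min one_pos hε) ha
  refine ⟨⟨⟨_, hcont⟩, fun w => ?_, fun w => ?_⟩⟩ <;>
    induction w using OnePoint.rec <;> simp [a]

theorem ContinuousMap.homotopic_comp_onePointCongr_smulOfNeZero {E Y : Type*}
    [NormedAddCommGroup E] [NormedSpace ℝ E] [ProperSpace E] [TopologicalSpace Y]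
    (F : C(OnePoint E, Y)) {ε : ℝ} (hε : 0 < ε) :
    F.Homotopic (F.comp (Homeomorph.smulOfNeZero (α := E) ε hε.ne').onePointCongr) := by
  simpa using (Homotopic.refl F).comp (OnePoint.homotopic_id_onePointCongr_smulOfNeZero hε)

theorem ContinuousMap.homotopic_of_segment_subset {X E : Type*} [TopologicalSpace X]
    [AddCommGroup E] [TopologicalSpace E] [IsTopologicalAddGroup E] [Module ℝ E]
    [ContinuousSMul ℝ E] {U : Set E} {f g : C(X, U)} (h : ∀ x, segment ℝ (f x : E) (g x) ⊆ U) :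
    f.Homotopic g := by
  refine ⟨⟨⟨fun p => ⟨(1 - p.1 : ℝ) • (f p.2 : E) + (p.1 : ℝ) • (g p.2 : E), h p.2
    ⟨_, _, sub_nonneg.2 p.1.2.2, p.1.2.1, sub_add_cancel 1 _, rfl⟩⟩, by fun_prop⟩,
    fun x => by simp, fun x => by simp⟩⟩

theorem OnePoint.exists_homotopic_contDiff_hasCompactSupport {E F : Type*}
    [NormedAddCommGroup E] [NormedSpace ℝ E] [FiniteDimensional ℝ E]
    [NormedAddCommGroup F] [NormedSpace ℝ F] [CompleteSpace F] {U : Set F} (hU : IsOpen U)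
    (G : C(OnePoint E, U)) :
    ∃ h : E → F, ContDiff ℝ (⊤ : ℕ∞) h ∧ HasCompactSupport h ∧
      ∃ G' : C(OnePoint E, U), (∀ u : E, (G' u : F) = G ∞ + h u) ∧ G' ∞ = G ∞ ∧
        G.Homotopic G' := by
  have hGc : Continuous fun w => (G w : F) := continuous_subtype_val.comp G.continuous
  obtain ⟨δ, hδ, hδU⟩ := (isCompact_range hGc).exists_thickening_subset_open hU
    (range_subset_iff.2 fun w => (G w).2)
  have hG_tendsto : Tendsto (fun u : E => (G u : F)) (cocompact E) (𝓝 (G ∞)) := by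
    simpa only [coclosedCompact_eq_cocompact] using ((OnePoint.continuous_iff _).1 hGc).1
  have hGc' : Continuous fun u : E => (G u : F) := hGc.comp continuous_coe
  obtain ⟨h, h_smooth, h_supp, h_dist⟩ :=
    hGc'.exists_contDiff_hasCompactSupport_dist_lt hG_tendsto hδ
  have h_segment : ∀ u : E, segment ℝ (G u : F) (G ∞ + h u) ⊆ U := fun u =>
    ((convex_ball (G u : F) δ).segment_subset (Metric.mem_ball_self hδ) (h_dist u)).trans
      ((Metric.ball_subset_thickening
        (mem_range_self (f := fun w => (G w : F)) (u : OnePoint E)) δ).trans hδU)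
  let G' : C(OnePoint E, U) :=
    continuousMapMk ⟨fun u => ⟨G ∞ + h u, h_segment u (right_mem_segment _ _ _)⟩, by fun_prop⟩
      (G ∞) <| by
        rw [tendsto_subtype_rng, coclosedCompact_eq_cocompact]
        simpa using tendsto_const_nhds.add h_supp.is_zero_at_infty
  refine ⟨h, h_smooth, h_supp, G', fun u => rfl, rfl,
    ContinuousMap.homotopic_of_segment_subset fun w => ?_⟩
  induction w using OnePoint.rec with
  | infty =>
    show segment ℝ (G ∞ : F) (G ∞) ⊆ U
    simp
  | coe u => exact h_segment u

theorem isClosed_SkSet (n k : ℕ) : IsClosed (SkSet n k) := by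
  unfold SkSet
  split_ifs
  · exact isClosed_singleton
  · simp only [ofPred_and, ofPred_forall]
    exact (isClosed_eq continuous_norm continuous_const).inter
      (isClosed_iInter fun j => isClosed_iInter fun _ => isClosed_eq (by fun_prop) continuous_const)

theorem Jstd_apply {n : ℕ} (p : Euc n × Euc n) : Jstd n p = (-p.2, p.1) := rfl

theorem range_prod_id_inf_map_Jstd_eq_bot {n : ℕ} {A : Euc n →L[ℝ] Euc n} (hA : ‖A‖ < 1) :
    (LinearMap.range (A.prod (.id ℝ (Euc n))).toLinearMap ⊓
      Submodule.map (Jstd n) (LinearMap.range (A.prod (.id ℝ (Euc n))).toLinearMap)) = ⊥ := by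
  rw [Submodule.eq_bot_iff]
  -- `(A v, v) = J (A w, w) = (-w, A w)` gives `A (A w) = -w`, impossible for a contraction
  rintro _ ⟨⟨v, rfl⟩, _, ⟨w, rfl⟩, hJ⟩
  simp only [ContinuousLinearMap.coe_coe, ContinuousLinearMap.prod_apply, Jstd_apply,
    ContinuousLinearMap.id_apply, Prod.mk.injEq] at hJ ⊢
  obtain ⟨hv, rfl⟩ := hJ
  have hw : w = 0 := by
    have : ‖w‖ ≤ ‖A‖ ^ 2 * ‖w‖ := by
      calc ‖w‖ = ‖A (A w)‖ := by rw [← hv, norm_neg]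
        _ ≤ ‖A‖ * (‖A‖ * ‖w‖) := A.le_opNorm_of_le (A.le_opNorm w)
        _ = ‖A‖ ^ 2 * ‖w‖ := by ring
    have hA2 : ‖A‖ ^ 2 < 1 := by nlinarith [norm_nonneg A]
    exact norm_le_zero_iff.1 (by nlinarith [norm_nonneg w])
  simp [hw]

theorem exists_totally_real_embedding_realizing_homotopy_class_general
    (n k : ℕ)
    (x : Euc n) (hx : x ∉ SkSet n k)
    (G : C(OnePoint (Euc n), {y : Euc n // y ∉ SkSet n k}))
    (hG : G ∞ = ⟨x, hx⟩) :
    ∃ (f : Euc n → Euc n × Euc n) (K : Set (Euc n)),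
      -- f is a C^∞ topological embedding with everywhere injective derivative
      ContDiff ℝ (⊤ : ℕ∞) f ∧ Topology.IsEmbedding f ∧
      (∀ u : Euc n, Function.Injective (fderiv ℝ f u)) ∧
      -- (i) f coincides with the cotangent fiber over x outside a compact set
      IsCompact K ∧ (∀ u ∉ K, f u = (x, u)) ∧
      -- (ii) f is totally real: P ∩ J(P) = {0} for P the image of the derivative
      (∀ u : Euc n,
        (LinearMap.range (fderiv ℝ f u).toLinearMap ⊓
          Submodule.map (Jstd n) (LinearMap.range (fderiv ℝ f u).toLinearMap) :
          Submodule ℝ (Euc n × Euc n)) = ⊥) ∧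
      -- (iii) f avoids the cotangent fibers over S_k
      (∀ u : Euc n, (f u).1 ∉ SkSet n k) ∧
      -- (iv) the continuous extension of pr ∘ f to OnePoint ℝ^n is homotopic to G
      ∃ F : C(OnePoint (Euc n), {y : Euc n // y ∉ SkSet n k}),
        (∀ u : Euc n, (F (u : OnePoint (Euc n)) : Euc n) = (f u).1) ∧
        F ∞ = ⟨x, hx⟩ ∧
        F.Homotopic G := by
  obtain ⟨h, h_smooth, h_supp, G₀, hG₀, hG₀_infty, hGG₀⟩ :=
    OnePoint.exists_homotopic_contDiff_hasCompactSupport (isClosed_SkSet n k).isOpen_compl G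
  simp only [hG] at hG₀ hG₀_infty
  obtain ⟨ε, hε, h_deriv⟩ :=
    h_supp.exists_pos_forall_norm_fderiv_comp_smul_lt (h_smooth.of_le (by simp)) one_pos
  let g : Euc n → Euc n := fun u => x + h (ε • u)
  have hg : ContDiff ℝ (⊤ : ℕ∞) g := contDiff_const.add (h_smooth.comp (contDiff_const_smul ε))
  have hdf : ∀ u, fderiv ℝ (fun v => (g v, v)) u = (fderiv ℝ g u).prod (.id ℝ _) :=
    fun u => (hg.differentiable (by simp) u).fderiv_prodMk_id
  let F : C(OnePoint (Euc n), {y : Euc n // y ∉ SkSet n k}) :=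
    G₀.comp (Homeomorph.smulOfNeZero (α := Euc n) ε hε.ne').onePointCongr
  refine ⟨fun u => (g u, u), tsupport fun u => h (ε • u), hg.prodMk contDiff_id,
    .of_comp (by fun_prop) continuous_snd .id, fun u v w hvw => ?_, h_supp.comp_smul hε.ne',
    fun u hu => by simp [g, image_eq_zero_of_notMem_tsupport hu], fun u => ?_,
    fun u => ?_, F, fun u => hG₀ (ε • u), hG₀_infty,
    (hGG₀.trans (G₀.homotopic_comp_onePointCongr_smulOfNeZero hε)).symm⟩
  · rw [hdf u] at hvw
    exact congrArg Prod.snd hvw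
  · rw [hdf u]
    exact range_prod_id_inf_map_Jstd_eq_bot (by simpa [g] using h_deriv u)
  · show x + h (ε • u) ∉ SkSet n k
    exact hG₀ (ε • u) ▸ (G₀ _).2

/-- **Lemma 7.1.** Every homotopy class of maps `S^n → ℝ^n \ S_k` is realized by the
projection of a totally real embedding of `ℝ^n` into `T*ℝ^n` that agrees with the cotangent
fiber over `x` near infinity and avoids the cotangent fibers over `S_k`. -/
theorem exists_totally_real_embedding_realizing_homotopy_class
    (n k : ℕ) (hn : 2 ≤ n) (hk : k + 2 ≤ n)
    (x : Euc n) (hx : x ∉ SkSet n k)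
    (G : C(OnePoint (Euc n), {y : Euc n // y ∉ SkSet n k}))
    (hG : G ∞ = ⟨x, hx⟩) :
    ∃ (f : Euc n → Euc n × Euc n) (K : Set (Euc n)),
      -- f is a C^∞ topological embedding with everywhere injective derivative
      ContDiff ℝ (⊤ : ℕ∞) f ∧ Topology.IsEmbedding f ∧
      (∀ u : Euc n, Function.Injective (fderiv ℝ f u)) ∧
      -- (i) f coincides with the cotangent fiber over x outside a compact set
      IsCompact K ∧ (∀ u ∉ K, f u = (x, u)) ∧
      -- (ii) f is totally real: P ∩ J(P) = {0} for P the image of the derivative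
      (∀ u : Euc n,
        (LinearMap.range (fderiv ℝ f u).toLinearMap ⊓
          Submodule.map (Jstd n) (LinearMap.range (fderiv ℝ f u).toLinearMap) :
          Submodule ℝ (Euc n × Euc n)) = ⊥) ∧
      -- (iii) f avoids the cotangent fibers over S_k
      (∀ u : Euc n, (f u).1 ∉ SkSet n k) ∧
      -- (iv) the continuous extension of pr ∘ f to OnePoint ℝ^n is homotopic to G
      ∃ F : C(OnePoint (Euc n), {y : Euc n // y ∉ SkSet n k}),
        (∀ u : Euc n, (F (u : OnePoint (Euc n)) : Euc n) = (f u).1) ∧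
        F ∞ = ⟨x, hx⟩ ∧
        F.Homotopic G :=
  exists_totally_real_embedding_realizing_homotopy_class_general n k x hx G hG
end
end

section
/- Let n ≥ 1 and let S^n = {z ∈ ℝ^{n+1} : ‖z‖ = 1} be the unit sphere in EuclideanSpace ℝ (Fin (n+1)) with its standard smooth manifold structure; write a point of ℝ^{n+1} as (x, y) with x ∈ ℝ^n the first n coordinates and y ∈ ℝ the last coordinate. Define the Whitney map w : S^n → ℝ^n × ℝ^n by w(x,y) = (x, y • x). Then: (a) w is C^∞ and an immersion (its derivative mfderiv is injective at every point of S^n); (b) w is Lagrangian: the standard symplectic form ω((q,p),(q',p')) = ⟪q,p'⟫ − ⟪q',p⟫ vanishes on all pairs of vectors in the image of the derivative of w at any point; (c) w has exactly one double point: for p ≠ q in S^n, w(p) = w(q) holds if and only if {p,q} = {(0,1), (0,−1)}, and w(0,±1) = (0,0); (d) the double point is transverse: the images of the derivatives of w at (0,1) and at (0,−1) together span ℝ^n × ℝ^n. -/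
open scoped RealInnerProductSpace Manifold

noncomputable section

/-- The standard symplectic form on `ℝ^n × ℝ^n`. -/
def symplForm (n : ℕ) (v w : Euc n × Euc n) : ℝ := ⟪v.1, w.2⟫ - ⟪w.1, v.2⟫

/-- The unit `n`-sphere in `ℝ^{n+1}` with its standard smooth manifold structure. -/
abbrev USphere (n : ℕ) : Type := Metric.sphere (0 : Euc (n + 1)) 1

/-- The first `n` coordinates of a point of `ℝ^{n+1}`. -/
def firstCoords (n : ℕ) (z : Euc (n + 1)) : Euc n := WithLp.toLp 2 (fun i : Fin n => z i.castSucc)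

/-- The last coordinate of a point of `ℝ^{n+1}`. -/
def lastCoord (n : ℕ) (z : Euc (n + 1)) : ℝ := z (Fin.last n)

/-- The Whitney map `w(x, y) = (x, y • x)` on the unit sphere, where `x ∈ ℝ^n` is the
vector of first `n` coordinates and `y ∈ ℝ` is the last coordinate. -/
def whitneyMap (n : ℕ) (z : USphere n) : Euc n × Euc n :=
  (firstCoords n z.val, lastCoord n z.val • firstCoords n z.val)

/-- The "north pole" `(0, 1)` of the unit sphere. -/
def northPole (n : ℕ) : USphere n :=
  ⟨EuclideanSpace.single (Fin.last n) (1 : ℝ), by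
    simp [mem_sphere_zero_iff_norm, EuclideanSpace.norm_single]⟩

/-- The "south pole" `(0, −1)` of the unit sphere. -/
def southPole (n : ℕ) : USphere n :=
  ⟨EuclideanSpace.single (Fin.last n) (-1 : ℝ), by
    simp [mem_sphere_zero_iff_norm, EuclideanSpace.norm_single]⟩

def Acl (n : ℕ) : Euc (n+1) →L[ℝ] Euc n :=
  LinearMap.toContinuousLinearMap
    { toFun := firstCoords n
      map_add' := fun _ _ => by ext; simp [firstCoords]
      map_smul' := fun _ _ => by ext; simp [firstCoords] }

def Bcl (n : ℕ) : Euc (n+1) →L[ℝ] ℝ :=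
  LinearMap.toContinuousLinearMap
    { toFun := lastCoord n
      map_add' := fun _ _ => rfl
      map_smul' := fun _ _ => rfl }

@[simp] lemma Acl_apply (n : ℕ) (z : Euc (n+1)) : Acl n z = firstCoords n z := rfl
@[simp] lemma Bcl_apply (n : ℕ) (z : Euc (n+1)) : Bcl n z = lastCoord n z := rfl

def Dw (n : ℕ) (z : Euc (n+1)) : Euc (n+1) →L[ℝ] Euc n × Euc n :=
  (Acl n).prod (lastCoord n z • Acl n + (Bcl n).smulRight (firstCoords n z))

lemma Dw_apply (n : ℕ) (z u : Euc (n+1)) :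
    Dw n z u = (firstCoords n u,
      lastCoord n z • firstCoords n u + lastCoord n u • firstCoords n z) := by
  simp [Dw]

lemma hasF (n : ℕ) (z : Euc (n+1)) :
    HasFDerivAt (fun z => (Acl n z, Bcl n z • Acl n z)) (Dw n z) z := by
  have := ((Bcl n).hasFDerivAt (x := z)).smul ((Acl n).hasFDerivAt (x := z))
  exact ((Acl n).hasFDerivAt (x := z)).prodMk this

lemma smoothF (n : ℕ) :
    ContMDiff 𝓘(ℝ, Euc (n+1)) 𝓘(ℝ, Euc n × Euc n) (⊤ : ℕ∞)
      (fun z => (Acl n z, Bcl n z • Acl n z)) :=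
  contMDiff_iff_contDiff.mpr (((Acl n).contDiff).prodMk (((Bcl n).contDiff).smul (Acl n).contDiff))

lemma whitney_eq (n : ℕ) :
    whitneyMap n = (fun z => (Acl n z, Bcl n z • Acl n z)) ∘ ((↑) : USphere n → Euc (n+1)) :=
  rfl

lemma smooth_whitney (n : ℕ) :
    ContMDiff (𝓡 n) 𝓘(ℝ, Euc n × Euc n) (⊤ : ℕ∞) (whitneyMap n) := by
  haveI := Fact.mk (@finrank_euclideanSpace_fin ℝ _ (n + 1))
  rw [whitney_eq]
  exact (smoothF n).comp contMDiff_coe_sphere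

lemma mfderiv_whitney (n : ℕ) (p : USphere n) :
    mfderiv (𝓡 n) 𝓘(ℝ, Euc n × Euc n) (whitneyMap n) p =
      (Dw n p.val).comp
        (mfderiv (𝓡 n) 𝓘(ℝ, Euc (n+1)) ((↑) : USphere n → Euc (n+1)) p) := by
  haveI := Fact.mk (@finrank_euclideanSpace_fin ℝ _ (n + 1))
  rw [whitney_eq, mfderiv_comp p ((smoothF n).mdifferentiableAt (by simp))
    ((contMDiff_coe_sphere (m := 1) p).mdifferentiableAt one_ne_zero)]
  congr 1
  rw [mfderiv_eq_fderiv]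
  exact (hasF n p.val).fderiv

@[simp] lemma first_zero (n : ℕ) : firstCoords n 0 = 0 := by ext; simp [firstCoords]
@[simp] lemma last_zero (n : ℕ) : lastCoord n 0 = 0 := rfl

lemma inner_decomp (n : ℕ) (z w : Euc (n+1)) :
    ⟪z, w⟫ = ⟪firstCoords n z, firstCoords n w⟫ + lastCoord n z * lastCoord n w := by
  simp [PiLp.inner_apply, Fin.sum_univ_castSucc, firstCoords, lastCoord, RCLike.inner_apply, mul_comm]

lemma eq_of_coords {n : ℕ} {z w : Euc (n+1)} (h1 : firstCoords n z = firstCoords n w)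
    (h2 : lastCoord n z = lastCoord n w) : z = w := by
  ext i
  induction i using Fin.lastCases with
  | last => exact h2
  | cast j => exact congrArg (fun x : Euc n => x j) h1

lemma first_single (n : ℕ) (c : ℝ) :
    firstCoords n (EuclideanSpace.single (Fin.last n) c) = 0 := by
  ext j
  simp [firstCoords, EuclideanSpace.single_apply, (Fin.castSucc_lt_last j).ne]

lemma last_single (n : ℕ) (c : ℝ) :
    lastCoord n (EuclideanSpace.single (Fin.last n) c) = c := by
  simp [lastCoord, EuclideanSpace.single_apply]

lemma eq_single_of_first_zero {n : ℕ} {z : Euc (n+1)} (h1 : firstCoords n z = 0) :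
    z = EuclideanSpace.single (Fin.last n) (lastCoord n z) :=
  eq_of_coords (by rw [h1, first_single]) (by rw [last_single])

lemma last_sq_of_first_zero {n : ℕ} {z : Euc (n+1)} (hz : ‖z‖ = 1)
    (h1 : firstCoords n z = 0) : lastCoord n z = 1 ∨ lastCoord n z = -1 := by
  have h := real_inner_self_eq_norm_sq z
  rw [hz] at h
  have hd := inner_decomp n z z
  rw [h, h1] at hd
  simp only [inner_zero_left, zero_add, one_pow] at hd
  exact mul_self_eq_one_iff.mp hd.symm

lemma Dw_inj (n : ℕ) {z u : Euc (n+1)} (hz : ‖z‖ = 1) (hu : ⟪z, u⟫ = 0)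
    (h : Dw n z u = 0) : u = 0 := by
  rw [Dw_apply] at h
  have h1 : firstCoords n u = 0 := congrArg Prod.fst h
  have h2 : lastCoord n z • firstCoords n u + lastCoord n u • firstCoords n z = 0 :=
    congrArg Prod.snd h
  rw [h1, smul_zero, zero_add] at h2
  have key : lastCoord n u = 0 := by
    by_cases hA : firstCoords n z = 0
    · have hd := inner_decomp n z u
      rw [hu, hA] at hd
      simp only [inner_zero_left, zero_add] at hd
      rcases last_sq_of_first_zero hz hA with hB | hB <;> rw [hB] at hd <;> linarith
    · rcases smul_eq_zero.mp h2 with h' | h'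
      · exact h'
      · exact absurd h' hA
  exact eq_of_coords (by rw [h1, first_zero]) (by rw [key, last_zero])

lemma tangent_orth (n : ℕ) (p : USphere n) (v : TangentSpace (𝓡 n) p) :
    ⟪(p : Euc (n+1)),
      mfderiv (𝓡 n) 𝓘(ℝ, Euc (n+1)) ((↑) : USphere n → Euc (n+1)) p v⟫ = 0 := by
  haveI := Fact.mk (@finrank_euclideanSpace_fin ℝ _ (n + 1))
  have hmem : mfderiv (𝓡 n) 𝓘(ℝ, Euc (n+1)) ((↑) : USphere n → Euc (n+1)) p v ∈
      (mfderiv (𝓡 n) 𝓘(ℝ, Euc (n+1)) ((↑) : USphere n → Euc (n+1)) p :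
        TangentSpace (𝓡 n) p →L[ℝ] Euc (n+1)).range := ⟨v, rfl⟩
  rw [range_mfderiv_coe_sphere] at hmem
  exact Submodule.mem_orthogonal_singleton_iff_inner_right.mp hmem

lemma Dw_mem_range (n : ℕ) (p : USphere n) (u : Euc (n+1))
    (hu : ⟪(p : Euc (n+1)), u⟫ = 0) :
    Dw n p.val u ∈ LinearMap.range
      (mfderiv (𝓡 n) 𝓘(ℝ, Euc n × Euc n) (whitneyMap n) p).toLinearMap := by
  haveI := Fact.mk (@finrank_euclideanSpace_fin ℝ _ (n + 1))
  have hmem : u ∈ (mfderiv (𝓡 n) 𝓘(ℝ, Euc (n+1))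
      ((↑) : USphere n → Euc (n+1)) p : TangentSpace (𝓡 n) p →L[ℝ] Euc (n+1)).range := by
    rw [range_mfderiv_coe_sphere]
    exact Submodule.mem_orthogonal_singleton_iff_inner_right.mpr hu
  obtain ⟨v, hv⟩ := hmem
  refine ⟨v, ?_⟩
  show mfderiv (𝓡 n) 𝓘(ℝ, Euc n × Euc n) (whitneyMap n) p v = _
  rw [mfderiv_whitney]
  exact congrArg (Dw n p.val) hv

lemma inj_whitney (n : ℕ) (p : USphere n) :
    Function.Injective (mfderiv (𝓡 n) 𝓘(ℝ, Euc n × Euc n) (whitneyMap n) p) := by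
  haveI := Fact.mk (@finrank_euclideanSpace_fin ℝ _ (n + 1))
  intro v w h
  rw [mfderiv_whitney] at h
  apply mfderiv_coe_sphere_injective p
  have hz : ‖(p : Euc (n+1))‖ = 1 := by
    simpa [mem_sphere_zero_iff_norm] using p.2
  set J : TangentSpace (𝓡 n) p →L[ℝ] Euc (n+1) := mfderiv (𝓡 n) 𝓘(ℝ, Euc (n+1)) ((↑) : USphere n → Euc (n+1)) p with hJ
  have h0 : Dw n p.val (J v - J w) = 0 := by
    rw [map_sub]
    have h' : Dw n p.val (J v) = Dw n p.val (J w) := h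
    rw [h', sub_self]
  have horth : ⟪(p : Euc (n+1)), J v - J w⟫ = 0 := by
    rw [inner_sub_right, sub_eq_zero]
    exact (tangent_orth n p v).trans (tangent_orth n p w).symm
  have := Dw_inj n hz horth h0
  exact sub_eq_zero.mp this

lemma sympl_eval (n : ℕ) (z a b : Euc (n+1)) (ha : ⟪z, a⟫ = 0) (hb : ⟪z, b⟫ = 0) :
    symplForm n (Dw n z a) (Dw n z b) = 0 := by
  have da := inner_decomp n z a
  have db := inner_decomp n z b
  rw [ha] at da
  rw [hb] at db
  rw [Dw_apply, Dw_apply]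
  simp only [symplForm, inner_add_right, real_inner_smul_right]
  rw [real_inner_comm] at da db
  linear_combination (-lastCoord n b) * da + lastCoord n a * db - lastCoord n z * real_inner_comm (firstCoords n a) (firstCoords n b)

def pad (n : ℕ) (x : Euc n) : Euc (n+1) :=
  WithLp.toLp 2 (fun i => Fin.lastCases (motive := fun _ => ℝ) 0 (fun j => x j) i)

@[simp] lemma first_pad (n : ℕ) (x : Euc n) : firstCoords n (pad n x) = x := by
  ext j
  simp [firstCoords, pad]

@[simp] lemma last_pad (n : ℕ) (x : Euc n) : lastCoord n (pad n x) = 0 := by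
  simp [lastCoord, pad]

lemma pole_orth (n : ℕ) (c : ℝ) (x : Euc n) :
    ⟪EuclideanSpace.single (Fin.last n) c, pad n x⟫ = 0 := by
  rw [inner_decomp, first_single, last_pad]
  simp


/-- **The Whitney immersion.** For `n ≥ 1` the Whitney map `w : S^n → ℝ^n × ℝ^n`,
`w(x,y) = (x, y • x)`, is (a) a `C^∞` immersion; (b) Lagrangian; (c) has exactly one double
point, namely `w(0,1) = w(0,−1) = (0,0)`; and (d) the double point is transverse. -/
theorem whitney_map_is_lagrangian_immersion_with_one_transverse_double_point
    (n : ℕ) (hn : 1 ≤ n) :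
    -- (a) smooth immersion
    ContMDiff (𝓡 n) 𝓘(ℝ, Euc n × Euc n) (⊤ : ℕ∞) (whitneyMap n) ∧
    (∀ p : USphere n,
      Function.Injective (mfderiv (𝓡 n) 𝓘(ℝ, Euc n × Euc n) (whitneyMap n) p)) ∧
    -- (b) Lagrangian
    (∀ p : USphere n, ∀ v w : TangentSpace (𝓡 n) p,
      symplForm n (mfderiv (𝓡 n) 𝓘(ℝ, Euc n × Euc n) (whitneyMap n) p v)
        (mfderiv (𝓡 n) 𝓘(ℝ, Euc n × Euc n) (whitneyMap n) p w) = 0) ∧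
    -- (c) exactly one double point, at the poles, with value (0,0)
    (∀ p q : USphere n, p ≠ q →
      (whitneyMap n p = whitneyMap n q ↔
        ((p = northPole n ∧ q = southPole n) ∨ (p = southPole n ∧ q = northPole n)))) ∧
    whitneyMap n (northPole n) = (0, 0) ∧
    whitneyMap n (southPole n) = (0, 0) ∧
    -- (d) transversality of the double point
    ((LinearMap.range
        (mfderiv (𝓡 n) 𝓘(ℝ, Euc n × Euc n) (whitneyMap n) (northPole n)).toLinearMap ⊔
      LinearMap.range
        (mfderiv (𝓡 n) 𝓘(ℝ, Euc n × Euc n) (whitneyMap n) (southPole n)).toLinearMap :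
        Submodule ℝ (Euc n × Euc n)) = ⊤) := by
  have hval : ∀ p : USphere n, ‖(p : Euc (n+1))‖ = 1 := fun p => by
    simpa [mem_sphere_zero_iff_norm] using p.2
  refine ⟨smooth_whitney n, inj_whitney n, ?_, ?_, ?_, ?_, ?_⟩
  · -- (b) Lagrangian
    intro p v w
    rw [mfderiv_whitney]
    exact sympl_eval n p.val _ _ (tangent_orth n p v) (tangent_orth n p w)
  · -- (c) double points
    intro p q hpq
    constructor
    · intro h
      have h1 : firstCoords n p.val = firstCoords n q.val := congrArg Prod.fst h
      have h2 : lastCoord n p.val • firstCoords n p.val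
          = lastCoord n q.val • firstCoords n q.val := congrArg Prod.snd h
      by_cases hA : firstCoords n p.val = 0
      · have hAq : firstCoords n q.val = 0 := h1.symm.trans hA
        have hp' := eq_single_of_first_zero hA
        have hq' := eq_single_of_first_zero hAq
        rcases last_sq_of_first_zero (hval p) hA with hp1 | hp1 <;>
          rcases last_sq_of_first_zero (hval q) hAq with hq1 | hq1
        · exact absurd (Subtype.ext ((hp'.trans (congrArg (EuclideanSpace.single (Fin.last n)) (hp1.trans hq1.symm))).trans hq'.symm)) hpq
        · exact Or.inl ⟨Subtype.ext (by rw [hp', hp1]; rfl),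
            Subtype.ext (by rw [hq', hq1]; rfl)⟩
        · exact Or.inr ⟨Subtype.ext (by rw [hp', hp1]; rfl),
            Subtype.ext (by rw [hq', hq1]; rfl)⟩
        · exact absurd (Subtype.ext ((hp'.trans (congrArg (EuclideanSpace.single (Fin.last n)) (hp1.trans hq1.symm))).trans hq'.symm)) hpq
      · exfalso
        rw [← h1] at h2
        have h2' : (lastCoord n p.val - lastCoord n q.val) • firstCoords n p.val = 0 := by
          rw [sub_smul, h2, sub_self]
        rcases smul_eq_zero.mp h2' with h' | h'
        · exact hpq (Subtype.ext (eq_of_coords h1 (sub_eq_zero.mp h')))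
        · exact hA h'
    · rintro (⟨hp, hq⟩ | ⟨hp, hq⟩) <;> subst hp <;> subst hq <;>
        simp [whitneyMap, northPole, southPole, first_single, last_single]
  · simp [whitneyMap, northPole, first_single, last_single]
  · simp [whitneyMap, southPole, first_single, last_single]
  · -- (d) transversality
    rw [eq_top_iff]
    rintro ⟨a, b⟩ -
    have hN := Dw_mem_range n (northPole n) (pad n ((2:ℝ)⁻¹ • (a + b)))
      (pole_orth n 1 _)
    have hS := Dw_mem_range n (southPole n) (pad n ((2:ℝ)⁻¹ • (a - b)))
      (pole_orth n (-1) _)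
    refine Submodule.mem_sup.mpr ⟨_, hN, _, hS, ?_⟩
    rw [Dw_apply, Dw_apply]
    show (_, _) + (_, _) = (a, b)
    have hnv : (northPole n : Euc (n+1)) = EuclideanSpace.single (Fin.last n) 1 := rfl
    have hsv : (southPole n : Euc (n+1)) = EuclideanSpace.single (Fin.last n) (-1) := rfl
    rw [Prod.mk_add_mk, Prod.mk.injEq, hnv, hsv, first_pad, first_pad, last_pad,
      first_single, first_single, last_single, last_single]
    constructor
    · module
    · rw [smul_zero, smul_zero, add_zero, add_zero, one_smul, neg_one_smul]
      module
end
end
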